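/- Let ((A,φ),(A*,W)) be a generalized Lie bialgebroid over M, L a Dirac structure for the double (A⊕A*, φ+W) and L̃=E(L) the associated Dirac structure of Ã⊕Ã*. For all L-admissible functions f,g ∈ C_L^∞(M), the brackets satisfy the homogeneity relation {e^t f, e^t g}_L̃ = e^t {f,g}_L. -/
import Mathlib


/-!
An algebraic formalization of generalized Lie bialgebroids `((A,φ),(A*,W))` over a manifold `M`,
of the associated generalized Courant algebroid (the double `(A ⊕ A*, φ + W)`), and of the
Courant algebroid `Ã ⊕ Ã*` over `M̃ = M × ℝ` attached to the induced Lie bialgebroid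
`(Ã, Ã*) = (A × ℝ, A* × ℝ)`.

The manifold `M` is encoded through its commutative ℝ-algebra `R` of smooth functions,
`M̃ = M × ℝ` through a commutative ℝ-algebra `R'` (containing `R` via `ι_R = π₁^*`, the
function `e^t`, and the derivation `∂/∂t`), and the vector bundles `A`, `A*`, `Ã`, `Ã*`
through the modules `A`, `B`, `At`, `Bt` of their (global) sections.  Vector fields are
encoded as derivations of the function algebras.
-/

noncomputable section

/-- A Lie algebroid structure on an `R`-module `A` (`R` = functions on the base):
an ℝ-bilinear Lie bracket on sections together with an anchor map into vector fields
(derivations of `R`), satisfying the Leibniz rule; the anchor is a morphism of brackets. -/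
structure LieAlgebroidStr (R : Type*) [CommRing R] [Algebra ℝ R]
    (A : Type*) [AddCommGroup A] [Module ℝ A] [Module R A] [IsScalarTower ℝ R A] where
  br : A → A → A
  br_add_left : ∀ X Y Z, br (X + Y) Z = br X Z + br Y Z
  br_smul_left : ∀ (c : ℝ) (X Y : A), br (c • X) Y = c • br X Y
  br_antisymm : ∀ X Y, br X Y = - br Y X
  br_jacobi : ∀ X Y Z, br X (br Y Z) = br (br X Y) Z + br Y (br X Z)
  anchor : A →ₗ[R] Derivation ℝ R R
  br_leibniz : ∀ (X : A) (f : R) (Y : A), br X (f • Y) = f • br X Y + anchor X f • Y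
  anchor_br : ∀ X Y, anchor (br X Y) = ⁅anchor X, anchor Y⁆

/-- All the data of a generalized Lie bialgebroid `((A,φ),(A*,W))` over `M` together with
the induced Lie bialgebroid `(Ã,Ã*)` over `M̃ = M × ℝ`.

* `la`, `laStar` : the Lie algebroid structures `([·,·],a)` on `A` and `([·,·]_*,a_*)` on `A* = B`;
* `pair` : the (nondegenerate) duality pairing `⟨α,X⟩` between `A*` and `A`;
* `phi`, `w` : the 1-cocycles `φ ∈ Γ(A*)`, `W ∈ Γ(A)`;
* `dd`, `ddStar` : the Lie algebroid differentials `d`, `d_*` on functions;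
* `colie` : the Lie derivative `L_Y α` of `A`-forms;
* `iDphi`, `iDw` : the contractions `i_X (d^φ α)` and `i_α (d_*^W X)`
  (so that `L^φ_X α = d^φ⟨α,X⟩ + i_X(d^φ α)` and `L_{*α}^W X = d_*^W⟨α,X⟩ + i_α(d_*^W X)`);
* `compat_deg1_bracket` : the generalized Lie bialgebroid condition
  `d_*^W [X,Y] = [d_*^W X, Y]^φ + [X, d_*^W Y]^φ`, with both sides (bivectors) evaluated on a
  pair of sections `(α,β)` of `A*`, using `[P,Y]^φ = -L_Y P + ⟨φ,Y⟩P` and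
  `[X,Q]^φ = L_X Q - ⟨φ,X⟩Q` for bivectors `P`, `Q`;
* `compat_deg0`, `compat_deg1` : the generalized Lie bialgebroid condition
  `L_{*φ}^W P + L_W^φ P = 0` for multisections `P` of degree `0` and `1` (which generate);
* `iota` (= `π₁^* : C^∞(M) → C^∞(M×ℝ)`), `expT` (= `e^t`), `expNT` (= `e^{-t}`),
  `ddt` (= `∂/∂t`) : the ambient data of `M̃ = M × ℝ`;
* `iotaA`, `iotaB` : the inclusions of sections of `A`, `A*` as time-independent sections of
  `Ã = A × ℝ`, `Ã* = A* × ℝ`; `genA`, `genB` : time-dependent sections are generated by these;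
* `extA`, `extB` : the time-independent extensions `ã(X)`, `ã_*(α)` of vector fields on `M`
  to `M × ℝ`;
* `laT` : the Lie algebroid structure `([·,·]^~φ, ã^φ)` on `Ã`, with
  `ã^φ(X) = ã(X) + ⟨φ,X⟩ ∂/∂t` on time-independent sections;
* `laTStar` : the Lie algebroid structure `([·,·]^^W_*, â_*^W)` on `Ã*`, with
  `[α,β]^^W_* = e^{-t}([α,β]_* + ⟨W,α⟩(∂β/∂t - β) - ⟨W,β⟩(∂α/∂t - α))` and
  `â_*^W(α) = e^{-t}(ã_*(α) + ⟨W,α⟩ ∂/∂t)` on time-independent sections;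
* `dT`, `dTStar` : the differentials `d̃^φ`, `d̂_*^W` on functions of the Lie algebroids
  `laT`, `laTStar` (`d̃^φ f̃ = d̃ f̃ + (∂f̃/∂t) φ` and `d̂_*^W f̃ = e^{-t}(d̃_* f̃ + (∂f̃/∂t) W)`);
* `iDT`, `iDTStar` : the corresponding contractions with the differential of a section,
  used to form the Lie derivatives entering the Courant bracket of `(Ã, Ã*)`. -/
structure Setup (R R' A B At Bt : Type*)
    [CommRing R] [Algebra ℝ R] [CommRing R'] [Algebra ℝ R']
    [AddCommGroup A] [Module ℝ A] [Module R A] [IsScalarTower ℝ R A]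
    [AddCommGroup B] [Module ℝ B] [Module R B] [IsScalarTower ℝ R B]
    [AddCommGroup At] [Module ℝ At] [Module R' At] [IsScalarTower ℝ R' At]
    [AddCommGroup Bt] [Module ℝ Bt] [Module R' Bt] [IsScalarTower ℝ R' Bt] where
  la : LieAlgebroidStr R A
  laStar : LieAlgebroidStr R B
  pair : B →ₗ[R] A →ₗ[R] R
  pair_nd_left : ∀ α, (∀ X, pair α X = 0) → α = 0
  pair_nd_right : ∀ X, (∀ α, pair α X = 0) → X = 0
  phi : B
  w : A
  phi_cocycle : ∀ X Y, pair phi (la.br X Y)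
      = la.anchor X (pair phi Y) - la.anchor Y (pair phi X)
  w_cocycle : ∀ α β, pair (laStar.br α β) w
      = laStar.anchor α (pair β w) - laStar.anchor β (pair α w)
  dd : R →ₗ[ℝ] B
  dd_spec : ∀ f X, pair (dd f) X = la.anchor X f
  ddStar : R →ₗ[ℝ] A
  ddStar_spec : ∀ f α, pair α (ddStar f) = laStar.anchor α f
  colie : A → B → B
  colie_spec : ∀ Y α Z, pair (colie Y α) Z = la.anchor Y (pair α Z) - pair α (la.br Y Z)
  iDphi : B → A → B
  iDphi_spec : ∀ α X Y, pair (iDphi α X) Y =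
    la.anchor X (pair α Y) - la.anchor Y (pair α X) - pair α (la.br X Y)
      + pair phi X * pair α Y - pair phi Y * pair α X
  iDw : A → B → A
  iDw_spec : ∀ X α β, pair β (iDw X α) =
    laStar.anchor α (pair β X) - laStar.anchor β (pair α X) - pair (laStar.br α β) X
      + pair α w * pair β X - pair β w * pair α X
  compat_deg1_bracket : ∀ X Y α β,
    (fun (Z : A) (γ δ : B) =>
        laStar.anchor γ (pair δ Z) - laStar.anchor δ (pair γ Z) - pair (laStar.br γ δ) Z
          + pair γ w * pair δ Z - pair δ w * pair γ Z) (la.br X Y) α β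
    = (la.anchor X ((fun Z γ δ => laStar.anchor γ (pair δ Z) - laStar.anchor δ (pair γ Z)
          - pair (laStar.br γ δ) Z + pair γ w * pair δ Z - pair δ w * pair γ Z) Y α β)
        - (fun Z γ δ => laStar.anchor γ (pair δ Z) - laStar.anchor δ (pair γ Z)
          - pair (laStar.br γ δ) Z + pair γ w * pair δ Z - pair δ w * pair γ Z) Y (colie X α) β
        - (fun Z γ δ => laStar.anchor γ (pair δ Z) - laStar.anchor δ (pair γ Z)
          - pair (laStar.br γ δ) Z + pair γ w * pair δ Z - pair δ w * pair γ Z) Y α (colie X β)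
        - pair phi X * (fun Z γ δ => laStar.anchor γ (pair δ Z) - laStar.anchor δ (pair γ Z)
          - pair (laStar.br γ δ) Z + pair γ w * pair δ Z - pair δ w * pair γ Z) Y α β)
      - (la.anchor Y ((fun Z γ δ => laStar.anchor γ (pair δ Z) - laStar.anchor δ (pair γ Z)
          - pair (laStar.br γ δ) Z + pair γ w * pair δ Z - pair δ w * pair γ Z) X α β)
        - (fun Z γ δ => laStar.anchor γ (pair δ Z) - laStar.anchor δ (pair γ Z)
          - pair (laStar.br γ δ) Z + pair γ w * pair δ Z - pair δ w * pair γ Z) X (colie Y α) β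
        - (fun Z γ δ => laStar.anchor γ (pair δ Z) - laStar.anchor δ (pair γ Z)
          - pair (laStar.br γ δ) Z + pair γ w * pair δ Z - pair δ w * pair γ Z) X α (colie Y β))
      + pair phi Y * (fun Z γ δ => laStar.anchor γ (pair δ Z) - laStar.anchor δ (pair γ Z)
          - pair (laStar.br γ δ) Z + pair γ w * pair δ Z - pair δ w * pair γ Z) X α β
  compat_deg0 : ∀ f : R, laStar.anchor phi f + la.anchor w f + 2 * pair phi w * f = 0
  compat_deg1 : ∀ X : A,
    ddStar (pair phi X) + pair phi X • w + iDw X phi + la.br w X = 0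
  -- the ambient data of `M̃ = M × ℝ`
  iota : R →ₐ[ℝ] R'
  iota_inj : Function.Injective iota
  expT : R'
  expNT : R'
  exp_mul : expT * expNT = 1
  ddt : Derivation ℝ R' R'
  ddt_iota : ∀ f, ddt (iota f) = 0
  ddt_expT : ddt expT = expT
  iotaA : A →+ At
  iotaA_smul : ∀ (f : R) (X : A), iotaA (f • X) = iota f • iotaA X
  iotaA_inj : Function.Injective iotaA
  iotaB : B →+ Bt
  iotaB_smul : ∀ (f : R) (α : B), iotaB (f • α) = iota f • iotaB α
  iotaB_inj : Function.Injective iotaB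
  pairT : Bt →ₗ[R'] At →ₗ[R'] R'
  pairT_nd_left : ∀ α, (∀ X, pairT α X = 0) → α = 0
  pairT_nd_right : ∀ X, (∀ α, pairT α X = 0) → X = 0
  pairT_iota : ∀ α X, pairT (iotaB α) (iotaA X) = iota (pair α X)
  genA : Submodule.span R' (Set.range iotaA) = ⊤
  genB : Submodule.span R' (Set.range iotaB) = ⊤
  extA : A → Derivation ℝ R' R'
  extA_iota : ∀ X f, extA X (iota f) = iota (la.anchor X f)
  extA_expT : ∀ X, extA X expT = 0
  extB : B → Derivation ℝ R' R'
  extB_iota : ∀ α f, extB α (iota f) = iota (laStar.anchor α f)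
  extB_expT : ∀ α, extB α expT = 0
  laT : LieAlgebroidStr R' At
  laTStar : LieAlgebroidStr R' Bt
  laT_br_iota : ∀ X Y, laT.br (iotaA X) (iotaA Y) = iotaA (la.br X Y)
  laT_anchor_iota : ∀ X, laT.anchor (iotaA X) = extA X + iota (pair phi X) • ddt
  laTStar_br_iota : ∀ α β, laTStar.br (iotaB α) (iotaB β) =
    expNT • ((iotaB (laStar.br α β) : Bt)
      + iota (pair β w) • iotaB α - iota (pair α w) • iotaB β)
  laTStar_anchor_iota : ∀ α, laTStar.anchor (iotaB α) =
    expNT • (extB α + iota (pair α w) • ddt)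
  dT : R' →ₗ[ℝ] Bt
  dT_spec : ∀ f' X', pairT (dT f') X' = laT.anchor X' f'
  dTStar : R' →ₗ[ℝ] At
  dTStar_spec : ∀ f' α', pairT α' (dTStar f') = laTStar.anchor α' f'
  iDT : Bt → At → Bt
  iDT_spec : ∀ α' X' Y', pairT (iDT α' X') Y' =
    laT.anchor X' (pairT α' Y') - laT.anchor Y' (pairT α' X') - pairT α' (laT.br X' Y')
  iDTStar : At → Bt → At
  iDTStar_spec : ∀ X' α' β', pairT β' (iDTStar X' α') =
    laTStar.anchor α' (pairT β' X') - laTStar.anchor β' (pairT α' X')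
      - pairT (laTStar.br α' β') X'

namespace Setup

variable {R R' A B At Bt : Type*}
    [CommRing R] [Algebra ℝ R] [CommRing R'] [Algebra ℝ R']
    [AddCommGroup A] [Module ℝ A] [Module R A] [IsScalarTower ℝ R A]
    [AddCommGroup B] [Module ℝ B] [Module R B] [IsScalarTower ℝ R B]
    [AddCommGroup At] [Module ℝ At] [Module R' At] [IsScalarTower ℝ R' At]
    [AddCommGroup Bt] [Module ℝ Bt] [Module R' Bt] [IsScalarTower ℝ R' Bt]
    (S : Setup R R' A B At Bt)

/-- The `φ`-differential on functions: `d^φ f = d f + f φ`. -/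
def dphiF (f : R) : B := S.dd f + f • S.phi

/-- The `W`-differential on functions: `d_*^W f = d_* f + f W`. -/
def dwF (f : R) : A := S.ddStar f + f • S.w

/-- The `φ`-Lie derivative `L^φ_X α = d^φ⟨α,X⟩ + i_X (d^φ α)` of a section of `A*`. -/
def lphi (X : A) (α : B) : B := S.dphiF (S.pair α X) + S.iDphi α X

/-- The `W`-Lie derivative `L_{*α}^W X = d_*^W⟨α,X⟩ + i_α (d_*^W X)` of a section of `A`. -/
def lw (α : B) (X : A) : A := S.dwF (S.pair α X) + S.iDw X α

/-- The skew-symmetric pairing `(e₁, e₂)_- = ½(⟨α₁,X₂⟩ - ⟨α₂,X₁⟩)` on `A ⊕ A*`. -/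
def minusPair (e₁ e₂ : A × B) : R :=
  algebraMap ℝ R (1 / 2) * (S.pair e₁.2 e₂.1 - S.pair e₂.2 e₁.1)

/-- The symmetric pairing `(e₁, e₂)_+ = ½(⟨α₁,X₂⟩ + ⟨α₂,X₁⟩)` on `A ⊕ A*`. -/
def plusPair (e₁ e₂ : A × B) : R :=
  algebraMap ℝ R (1 / 2) * (S.pair e₁.2 e₂.1 + S.pair e₂.2 e₁.1)

/-- The bracket `⟦·,·⟧` on sections of the double `A ⊕ A*` of the generalized Lie
bialgebroid `((A,φ),(A*,W))`:
`⟦X₁+α₁, X₂+α₂⟧ = ([X₁,X₂]^φ + L_{*α₁}^W X₂ - L_{*α₂}^W X₁ - d_*^W (e₁,e₂)_-)`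
`+ ([α₁,α₂]_*^W + L^φ_{X₁} α₂ - L^φ_{X₂} α₁ + d^φ (e₁,e₂)_-)`. -/
def brC (e₁ e₂ : A × B) : A × B :=
  (S.la.br e₁.1 e₂.1 + S.lw e₁.2 e₂.1 - S.lw e₂.2 e₁.1 - S.dwF (S.minusPair e₁ e₂),
   S.laStar.br e₁.2 e₂.2 + S.lphi e₁.1 e₂.2 - S.lphi e₂.1 e₁.2 + S.dphiF (S.minusPair e₁ e₂))

/-- The Lie derivative `L̃^φ_{X̃} α̃ = d̃^φ⟨α̃,X̃⟩ + i_X̃ (d̃^φ α̃)` on sections of `Ã*`. -/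
def lphiT (X' : At) (α' : Bt) : Bt := S.dT (S.pairT α' X') + S.iDT α' X'

/-- The Lie derivative `L̂_{α̃}^W X̃ = d̂_*^W⟨α̃,X̃⟩ + i_α̃ (d̂_*^W X̃)` on sections of `Ã`. -/
def lwT (α' : Bt) (X' : At) : At := S.dTStar (S.pairT α' X') + S.iDTStar X' α'

/-- The skew-symmetric pairing `(·,·)_-` on `Ã ⊕ Ã*`. -/
def minusPairT (e₁ e₂ : At × Bt) : R' :=
  algebraMap ℝ R' (1 / 2) * (S.pairT e₁.2 e₂.1 - S.pairT e₂.2 e₁.1)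

/-- The symmetric pairing `(·,·)_+` on `Ã ⊕ Ã*`. -/
def plusPairT (e₁ e₂ : At × Bt) : R' :=
  algebraMap ℝ R' (1 / 2) * (S.pairT e₁.2 e₂.1 + S.pairT e₂.2 e₁.1)

/-- The Courant bracket `⟦·,·⟧~` on sections of `Ã ⊕ Ã*` associated with the Lie
bialgebroid `(Ã, Ã*)`. -/
def brCT (e₁ e₂ : At × Bt) : At × Bt :=
  (S.laT.br e₁.1 e₂.1 + S.lwT e₁.2 e₂.1 - S.lwT e₂.2 e₁.1 - S.dTStar (S.minusPairT e₁ e₂),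
   S.laTStar.br e₁.2 e₂.2 + S.lphiT e₁.1 e₂.2 - S.lphiT e₂.1 e₁.2 + S.dT (S.minusPairT e₁ e₂))

/-- The embedding `E : Γ(A ⊕ A*) → Γ(Ã ⊕ Ã*)`, `E(X + α) = X + e^t α`. -/
def emb (e : A × B) : At × Bt := (S.iotaA e.1, S.expT • (S.iotaB e.2 : Bt))

/-- The subbundle `L̃ = E(L)` of `Ã ⊕ Ã*` associated with a subbundle `L ⊆ A ⊕ A*`: its
space of sections is spanned (over the functions on `M × ℝ`) by the image of `Γ(L)`
under the embedding `E`. -/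
def tildeSub (L : Submodule R (A × B)) : Submodule R' (At × Bt) :=
  Submodule.span R' (S.emb '' (L : Set (A × B)))

/-- A subbundle `L ⊆ A ⊕ A*` is isotropic when the symmetric pairing `(·,·)_+`
vanishes on it. -/
def IsIsotropic (L : Submodule R (A × B)) : Prop :=
  ∀ e₁ ∈ L, ∀ e₂ ∈ L, S.plusPair e₁ e₂ = 0

/-- A subbundle `L ⊆ A ⊕ A*` is maximally isotropic when it is isotropic and maximal
among isotropic subbundles. -/
def IsMaxIsotropic (L : Submodule R (A × B)) : Prop :=
  S.IsIsotropic L ∧ ∀ L' : Submodule R (A × B), S.IsIsotropic L' → L ≤ L' → L' = L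

/-- Isotropy in `Ã ⊕ Ã*`. -/
def IsIsotropicT (Lt : Submodule R' (At × Bt)) : Prop :=
  ∀ e₁ ∈ Lt, ∀ e₂ ∈ Lt, S.plusPairT e₁ e₂ = 0

/-- Maximal isotropy in `Ã ⊕ Ã*`. -/
def IsMaxIsotropicT (Lt : Submodule R' (At × Bt)) : Prop :=
  S.IsIsotropicT Lt ∧ ∀ Lt' : Submodule R' (At × Bt), S.IsIsotropicT Lt' → Lt ≤ Lt' → Lt' = Lt

/-- A Dirac structure for the generalized Courant algebroid `(A ⊕ A*, φ + W)`: a maximally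
isotropic subbundle whose sections are closed under the bracket `⟦·,·⟧`. -/
def IsDirac (L : Submodule R (A × B)) : Prop :=
  S.IsMaxIsotropic L ∧ ∀ e₁ ∈ L, ∀ e₂ ∈ L, S.brC e₁ e₂ ∈ L

/-- A Dirac structure for the Courant algebroid `Ã ⊕ Ã*`: a maximally isotropic subbundle
whose sections are closed under the bracket `⟦·,·⟧~`. -/
def IsDiracT (Lt : Submodule R' (At × Bt)) : Prop :=
  S.IsMaxIsotropicT Lt ∧ ∀ e₁ ∈ Lt, ∀ e₂ ∈ Lt, S.brCT e₁ e₂ ∈ Lt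

/-- The set `C_L^∞(M)` of `L`-admissible functions: `f` such that `Y_f + d^φ f ∈ Γ(L)`
for some `Y_f ∈ Γ(A)`. -/
def adm (L : Submodule R (A × B)) : Set R := {f | ∃ Y : A, (Y, S.dphiF f) ∈ L}

/-- The set `C_L̃^∞(M̃)` of `L̃`-admissible functions: `f̃` such that `Ỹ + d̃^φ f̃ ∈ Γ(L̃)`
for some `Ỹ ∈ Γ(Ã)`. -/
def admT (Lt : Submodule R' (At × Bt)) : Set R' := {f' | ∃ Y' : At, (Y', S.dT f') ∈ Lt}

open Classical in
/-- The bracket `{f,g}_L = ρ^θ(e_f) g` on `L`-admissible functions, where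
`e_f = Y_f + d^φ f ∈ Γ(L)` and `ρ^θ(e) = ρ(e) + ⟨θ, e⟩` with `θ = φ + W`
(the value is `0` on non-admissible functions). -/
noncomputable def jbr (L : Submodule R (A × B)) (f g : R) : R :=
  if h : ∃ Y : A, (Y, S.dphiF f) ∈ L then
    S.la.anchor h.choose g + S.laStar.anchor (S.dphiF f) g
      + (S.pair S.phi h.choose + S.pair (S.dphiF f) S.w) * g
  else 0

open Classical in
/-- The bracket `{f̃,g̃}_L̃ = ρ̃(ẽ_f̃) g̃` on `L̃`-admissible functions, where
`ẽ_f̃ = Ỹ + d̃^φ f̃ ∈ Γ(L̃)` and `ρ̃ = ã^φ + â_*^W`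
(the value is `0` on non-admissible functions). -/
noncomputable def jbrT (Lt : Submodule R' (At × Bt)) (f' g' : R') : R' :=
  if h : ∃ Y' : At, (Y', S.dT f') ∈ Lt then
    S.laT.anchor h.choose g' + S.laTStar.anchor (S.dT f') g'
  else 0

lemma pairT_dT_exp (f : R) (X' : At) :
    S.pairT (S.expT • S.iotaB (S.dphiF f)) X' = S.laT.anchor X' (S.expT * S.iota f) := by
  have hX' : X' ∈ Submodule.span R' (Set.range S.iotaA) := by rw [S.genA]; trivial
  induction hX' using Submodule.span_induction with
  | mem x hx =>
    obtain ⟨X, rfl⟩ := hx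
    rw [map_smul, LinearMap.smul_apply, smul_eq_mul, S.pairT_iota, S.laT_anchor_iota]
    rw [Derivation.add_apply, Derivation.smul_apply]
    rw [Derivation.leibniz, Derivation.leibniz]
    rw [S.extA_iota, S.extA_expT, S.ddt_iota, S.ddt_expT]
    simp only [smul_eq_mul, mul_zero, add_zero, zero_add]
    have : S.pair (S.dphiF f) X = S.la.anchor X f + f * S.pair S.phi X := by
      unfold Setup.dphiF
      rw [map_add, LinearMap.add_apply, map_smul, LinearMap.smul_apply, S.dd_spec,
        smul_eq_mul]
    rw [this, map_add, map_mul]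
    ring
  | zero => simp
  | add x y _ _ hx hy =>
    rw [map_add, hx, hy, map_add, Derivation.add_apply]
  | smul c x _ hx =>
    rw [map_smul, smul_eq_mul, hx, map_smul, Derivation.smul_apply, smul_eq_mul]

lemma dT_exp (f : R) : S.dT (S.expT * S.iota f) = S.expT • S.iotaB (S.dphiF f) := by
  have h : ∀ X', S.pairT (S.dT (S.expT * S.iota f) - S.expT • S.iotaB (S.dphiF f)) X' = 0 := by
    intro X'
    rw [map_sub, LinearMap.sub_apply, S.pairT_dT_exp, S.dT_spec, sub_self]
  have := S.pairT_nd_left _ h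
  rwa [sub_eq_zero] at this

end Setup

section Statements

variable {R R' A B At Bt : Type*}
    [CommRing R] [Algebra ℝ R] [CommRing R'] [Algebra ℝ R']
    [AddCommGroup A] [Module ℝ A] [Module R A] [IsScalarTower ℝ R A]
    [AddCommGroup B] [Module ℝ B] [Module R B] [IsScalarTower ℝ R B]
    [AddCommGroup At] [Module ℝ At] [Module R' At] [IsScalarTower ℝ R' At]
    [AddCommGroup Bt] [Module ℝ Bt] [Module R' Bt] [IsScalarTower ℝ R' Bt]

/-- for `L`-admissible functions `f, g ∈ C_L^∞(M)` (with `e_f = Y + d^φ f`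
a section of `L`), the homogeneity relation `{e^t f, e^t g}_L̃ = e^t {f,g}_L` holds, where
`{f,g}_L = ρ^θ(e_f) g` and `{f̃,g̃}_L̃ = ρ̃(ẽ_f̃) g̃` with `ẽ_{e^t f} = Y + d̃^φ(e^t f)`. -/
theorem stmt6 (S : Setup R R' A B At Bt) (L : Submodule R (A × B))
    (hL : S.IsDirac L) (f g : R) (hg : g ∈ S.adm L) (Y : A)
    (hY : (Y, S.dphiF f) ∈ L) :
    S.laT.anchor (S.iotaA Y) (S.expT * S.iota g)
        + S.laTStar.anchor (S.dT (S.expT * S.iota f)) (S.expT * S.iota g)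
      = S.expT * S.iota (S.la.anchor Y g + S.laStar.anchor (S.dphiF f) g
          + (S.pair S.phi Y + S.pair (S.dphiF f) S.w) * g) := by
  rw [S.dT_exp, map_smul, S.laTStar_anchor_iota, smul_smul, S.exp_mul, one_smul,
    S.laT_anchor_iota]
  rw [Derivation.add_apply, Derivation.add_apply, Derivation.smul_apply,
    Derivation.smul_apply]
  rw [Derivation.leibniz, Derivation.leibniz, Derivation.leibniz]
  rw [S.extA_iota, S.extA_expT, S.extB_iota, S.extB_expT, S.ddt_iota, S.ddt_expT]
  simp only [smul_eq_mul, mul_zero, add_zero, zero_add, map_add, map_mul]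
  ring

end Statements
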